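/- arXiv:2212.04237 — 7 statements merged into one kernel-verified Lean document; each statement's English description precedes it below -/
import Mathlib

section
/- Let c, α be positive constants and k₀ ∈ ℝ. Let φ : [k₀, ∞) → [0, ∞) be nonincreasing and satisfy φ(h) ≤ c·φ(k) / (h−k)^α for all h > k ≥ k₀. Then for every k ≥ k₀, φ(k) ≤ φ(k₀)·exp(1 − (c·e)^(−1/α)·(k − k₀)). -/
open Real

theorem stampacchia_beta_eq_one
    (c α k₀ : ℝ) (hc : 0 < c) (hα : 0 < α)
    (φ : ℝ → ℝ)
    (hnonneg : ∀ k, k₀ ≤ k → 0 ≤ φ k)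
    (hmono : AntitoneOn φ (Set.Ici k₀))
    (hdecay : ∀ h k, k₀ ≤ k → k < h → φ h ≤ c * φ k / (h - k) ^ α) :
    ∀ k, k₀ ≤ k →
      φ k ≤ φ k₀ * Real.exp (1 - (c * Real.exp 1) ^ (-1 / α) * (k - k₀)) := by
  intro k hk
  have hce : (0:ℝ) < c * Real.exp 1 := by positivity
  set d : ℝ := (c * Real.exp 1) ^ (1/α) with hd
  have hdpos : 0 < d := Real.rpow_pos_of_pos hce _
  have hdα : d ^ α = c * Real.exp 1 := by
    rw [hd, ← Real.rpow_mul hce.le, one_div_mul_cancel hα.ne', Real.rpow_one]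
  have hinv : (c * Real.exp 1) ^ (-1 / α) = d⁻¹ := by
    rw [neg_div, Real.rpow_neg hce.le, hd]
  -- key induction
  have key : ∀ n : ℕ, φ (k₀ + n * d) ≤ φ k₀ * Real.exp (-(n:ℝ)) := by
    intro n
    induction n with
    | zero => simp
    | succ n ih =>
      have hkn : k₀ ≤ k₀ + n * d := le_add_of_nonneg_right (by positivity)
      have hlt : k₀ + n * d < k₀ + (n + 1 : ℕ) * d := by
        push_cast; nlinarith
      have h1 := hdecay (k₀ + (n + 1 : ℕ) * d) (k₀ + n * d) hkn hlt
      have hsub : (k₀ + ((n:ℕ) + 1 : ℕ) * d) - (k₀ + n * d) = d := by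
        push_cast; ring
      rw [hsub, hdα] at h1
      have h2 : c * φ (k₀ + n * d) / (c * Real.exp 1)
          = φ (k₀ + n * d) * Real.exp (-1) := by
        rw [Real.exp_neg]
        field_simp
      rw [h2] at h1
      calc φ (k₀ + ((n:ℕ)+1:ℕ) * d) ≤ φ (k₀ + n * d) * Real.exp (-1) := h1
        _ ≤ (φ k₀ * Real.exp (-(n:ℝ))) * Real.exp (-1) := by
            exact mul_le_mul_of_nonneg_right ih (Real.exp_pos _).le
        _ = φ k₀ * Real.exp (-((n:ℕ)+1:ℝ)) := by
            rw [mul_assoc, ← Real.exp_add]; ring_nf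
        _ = φ k₀ * Real.exp (-(((n:ℕ)+1:ℕ):ℝ)) := by push_cast; ring_nf
  set n : ℕ := ⌊(k - k₀) / d⌋₊ with hn
  have hq0 : 0 ≤ (k - k₀) / d := div_nonneg (by linarith) hdpos.le
  have hfl : (n:ℝ) ≤ (k - k₀) / d := Nat.floor_le hq0
  have hnd : (n:ℝ) * d ≤ k - k₀ := by
    rw [← le_div_iff₀ hdpos]; exact hfl
  have hkn : k₀ + n * d ≤ k := by linarith
  have hkn0 : k₀ ≤ k₀ + (n:ℝ) * d := le_add_of_nonneg_right (by positivity)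
  have hmono' : φ k ≤ φ (k₀ + n * d) := hmono hkn0 hk hkn
  have hub : (k - k₀) / d < n + 1 := Nat.lt_floor_add_one _
  have hexp : Real.exp (-(n:ℝ)) ≤ Real.exp (1 - (k - k₀) / d) := by
    apply Real.exp_le_exp.mpr; linarith
  have := key n
  have hφ0 : 0 ≤ φ k₀ := hnonneg k₀ le_rfl
  calc φ k ≤ φ (k₀ + n * d) := hmono'
    _ ≤ φ k₀ * Real.exp (-(n:ℝ)) := key n
    _ ≤ φ k₀ * Real.exp (1 - (k - k₀) / d) := mul_le_mul_of_nonneg_left hexp hφ0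
    _ = φ k₀ * Real.exp (1 - (c * Real.exp 1) ^ (-1 / α) * (k - k₀)) := by
        rw [hinv, div_eq_inv_mul]
end

section
/- Let c, α be positive constants, 0 < β < 1, and k₀ > 0. Let φ : [k₀, ∞) → [0, ∞) be nonincreasing and satisfy φ(h) ≤ c·φ(k)^β / (h−k)^α for all h > k ≥ k₀. Then for every k ≥ k₀, φ(k) ≤ 2^(α/(1−β)²) · ( c^(1/(1−β)) + (2k₀)^(α/(1−β))·φ(k₀) ) · (1/k)^(α/(1−β)). -/
open Real

theorem stampacchia_beta_lt_one
    (c α β k₀ : ℝ) (hc : 0 < c) (hα : 0 < α) (hβ0 : 0 < β) (hβ1 : β < 1)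
    (hk₀ : 0 < k₀)
    (φ : ℝ → ℝ)
    (hnonneg : ∀ k, k₀ ≤ k → 0 ≤ φ k)
    (hmono : AntitoneOn φ (Set.Ici k₀))
    (hdecay : ∀ h k, k₀ ≤ k → k < h → φ h ≤ c * φ k ^ β / (h - k) ^ α) :
    ∀ k, k₀ ≤ k →
      φ k ≤ 2 ^ (α / (1 - β) ^ 2) *
        (c ^ (1 / (1 - β)) + (2 * k₀) ^ (α / (1 - β)) * φ k₀) *
        (1 / k) ^ (α / (1 - β)) := by
  have h1β : 0 < 1 - β := by linarith
  set μ := α / (1 - β) with hμdef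
  have hμ : 0 < μ := div_pos hα h1β
  have hμα : μ * (1 - β) = α := div_mul_cancel₀ _ (ne_of_gt h1β)
  have hμβα : μ * β + α = μ := by nlinarith [hμα]
  have hB : 0 ≤ (2 * k₀) ^ μ * φ k₀ :=
    mul_nonneg (Real.rpow_nonneg (by linarith) _) (hnonneg k₀ le_rfl)
  have he : α / (1 - β) ^ 2 = μ / (1 - β) := by rw [hμdef, div_div, ← sq]
  set S := 2 ^ (α / (1 - β) ^ 2) * (c ^ (1 / (1 - β)) + (2 * k₀) ^ μ * φ k₀) with hSdef
  set K := c * 2 ^ μ with hKdef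
  have hK : 0 < K := mul_pos hc (Real.rpow_pos_of_pos two_pos μ)
  have hSK : K ^ (1 / (1 - β)) ≤ S := by
    have h1 : K ^ (1 / (1 - β)) = c ^ (1 / (1 - β)) * 2 ^ (μ / (1 - β)) := by
      rw [hKdef, Real.mul_rpow hc.le (Real.rpow_nonneg (by norm_num) _),
        ← Real.rpow_mul (by norm_num : (0:ℝ) ≤ 2), mul_one_div]
    rw [h1, hSdef, he, mul_add]
    have h2 : (0:ℝ) ≤ 2 ^ (μ / (1 - β)) := Real.rpow_nonneg (by norm_num) _
    nlinarith [h2, hB]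
  have hS0 : 0 < S := lt_of_lt_of_le (Real.rpow_pos_of_pos hK _) hSK
  have hKS : K * S ^ β ≤ S := by
    have h1 : K ≤ S ^ (1 - β) := by
      have : (K ^ (1 / (1 - β))) ^ (1 - β) ≤ S ^ (1 - β) :=
        Real.rpow_le_rpow (Real.rpow_nonneg hK.le _) hSK h1β.le
      rwa [← Real.rpow_mul hK.le, one_div_mul_cancel h1β.ne', Real.rpow_one] at this
    calc K * S ^ β ≤ S ^ (1 - β) * S ^ β :=
          mul_le_mul_of_nonneg_right h1 (Real.rpow_nonneg hS0.le _)
      _ = S := by rw [← Real.rpow_add hS0]; norm_num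
  have hSB : (2 * k₀) ^ μ * φ k₀ ≤ S := by
    have h1 : (1:ℝ) ≤ 2 ^ (α / (1 - β) ^ 2) :=
      Real.one_le_rpow (by norm_num) (by positivity)
    have h2 : (0:ℝ) ≤ c ^ (1 / (1 - β)) := Real.rpow_nonneg hc.le _
    nlinarith [h1, h2, hB]
  have main : ∀ n : ℕ, ∀ k, k₀ ≤ k → k ≤ 2 ^ (n + 1) * k₀ → φ k * k ^ μ ≤ S := by
    intro n
    induction n with
    | zero =>
      intro k hk1 hk2
      have hk2' : k ≤ 2 * k₀ := by
        have : (2:ℝ) ^ (0 + 1) = 2 := by norm_num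
        linarith [hk2, this ▸ hk2]
      have hφ : φ k ≤ φ k₀ := hmono Set.self_mem_Ici hk1 hk1
      have hkpow : k ^ μ ≤ (2 * k₀) ^ μ :=
        Real.rpow_le_rpow (by linarith) hk2' hμ.le
      calc φ k * k ^ μ ≤ φ k₀ * (2 * k₀) ^ μ :=
            mul_le_mul hφ hkpow (Real.rpow_nonneg (by linarith) _) (hnonneg k₀ le_rfl)
        _ = (2 * k₀) ^ μ * φ k₀ := mul_comm _ _
        _ ≤ S := hSB
    | succ n ih =>
      intro k hk1 hk2
      by_cases hcase : k ≤ 2 ^ (n + 1) * k₀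
      · exact ih k hk1 hcase
      · push_neg at hcase
        have hpow1 : (2:ℝ) ≤ 2 ^ (n + 1) := by
          calc (2:ℝ) = 2 ^ 1 := (pow_one 2).symm
            _ ≤ 2 ^ (n + 1) := pow_le_pow_right₀ (by norm_num) (by omega)
        have hk0 : (0:ℝ) < k := by nlinarith
        have ht1 : k₀ ≤ k / 2 := by nlinarith
        have ht0 : (0:ℝ) < k / 2 := by linarith
        have hklt : k / 2 < k := by linarith
        have ht2 : k / 2 ≤ 2 ^ (n + 1) * k₀ := by
          have : (2:ℝ) ^ (n + 1 + 1) = 2 * 2 ^ (n + 1) := by ring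
          rw [this] at hk2; linarith
        have hih := ih (k / 2) ht1 ht2
        -- φ (k/2) ≤ S / (k/2)^μ
        have htpos : (0:ℝ) < (k / 2) ^ μ := Real.rpow_pos_of_pos ht0 _
        have hφt : φ (k / 2) ≤ S / (k / 2) ^ μ := (le_div_iff₀ htpos).mpr hih
        have hφtβ : φ (k / 2) ^ β ≤ S ^ β / (k / 2) ^ (μ * β) := by
          have := Real.rpow_le_rpow (hnonneg _ ht1) hφt hβ0.le
          rwa [Real.div_rpow hS0.le (Real.rpow_nonneg ht0.le _),
            ← Real.rpow_mul ht0.le] at this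
        have hd := hdecay k (k / 2) ht1 hklt
        have hsub : k - k / 2 = k / 2 := by ring
        rw [hsub] at hd
        have hapos : (0:ℝ) < (k / 2) ^ α := Real.rpow_pos_of_pos ht0 _
        have hd2 : φ k ≤ c * (S ^ β / (k / 2) ^ (μ * β)) / (k / 2) ^ α := by
          calc φ k ≤ c * φ (k / 2) ^ β / (k / 2) ^ α := hd
            _ ≤ c * (S ^ β / (k / 2) ^ (μ * β)) / (k / 2) ^ α := by
                gcongr
        have hd3 : φ k ≤ c * S ^ β / (k / 2) ^ μ := by
          have hmul : (k / 2) ^ (μ * β) * (k / 2) ^ α = (k / 2) ^ μ := by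
            rw [← Real.rpow_add ht0, hμβα]
          have hbpos : (0:ℝ) < (k / 2) ^ (μ * β) := Real.rpow_pos_of_pos ht0 _
          calc φ k ≤ c * (S ^ β / (k / 2) ^ (μ * β)) / (k / 2) ^ α := hd2
            _ = c * S ^ β / ((k / 2) ^ (μ * β) * (k / 2) ^ α) := by
                field_simp
            _ = c * S ^ β / (k / 2) ^ μ := by rw [hmul]
        have hhalf : (k / 2) ^ μ = k ^ μ / 2 ^ μ :=
          Real.div_rpow hk0.le (by norm_num : (0:ℝ) ≤ 2) μ
        have hkpos : (0:ℝ) < k ^ μ := Real.rpow_pos_of_pos hk0 _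
        have h2pos : (0:ℝ) < (2:ℝ) ^ μ := Real.rpow_pos_of_pos two_pos _
        have hd4 : φ k ≤ K * S ^ β / k ^ μ := by
          calc φ k ≤ c * S ^ β / (k / 2) ^ μ := hd3
            _ = c * S ^ β / (k ^ μ / 2 ^ μ) := by rw [hhalf]
            _ = K * S ^ β / k ^ μ := by rw [hKdef]; field_simp
        calc φ k * k ^ μ ≤ (K * S ^ β / k ^ μ) * k ^ μ :=
              mul_le_mul_of_nonneg_right hd4 hkpos.le
          _ = K * S ^ β := by field_simp
          _ ≤ S := hKS
  intro k hk
  obtain ⟨n, hn⟩ : ∃ n : ℕ, k ≤ 2 ^ (n + 1) * k₀ := by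
    obtain ⟨n, hn⟩ := pow_unbounded_of_one_lt (k / k₀) (by norm_num : (1:ℝ) < 2)
    refine ⟨n, ?_⟩
    have h1 : k / k₀ ≤ 2 ^ (n + 1) := le_of_lt (hn.trans_le
      (pow_le_pow_right₀ (by norm_num) (by omega)))
    calc k = (k / k₀) * k₀ := by field_simp
      _ ≤ 2 ^ (n + 1) * k₀ := mul_le_mul_of_nonneg_right h1 hk₀.le
  have hk0 : (0:ℝ) < k := lt_of_lt_of_le hk₀ hk
  have hkμ : (0:ℝ) < k ^ μ := Real.rpow_pos_of_pos hk0 _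
  have hmain := main n k hk hn
  have hfin : φ k ≤ S / k ^ μ := (le_div_iff₀ hkμ).mpr hmain
  have hone : (1 / k) ^ μ = 1 / k ^ μ := by
    rw [div_rpow (by norm_num) hk0.le, Real.one_rpow]
  rw [hSdef] at hfin
  rw [hone]
  calc φ k ≤ S / k ^ μ := (le_div_iff₀ hkμ).mpr hmain
    _ = S * (1 / k ^ μ) := by ring
end

section
/- Let c, α, β, k₀ be positive constants with β > 1, and let 0 ≤ θ < 1. Let φ : [k₀, ∞) → [0, ∞) be nonincreasing and satisfy φ(h) ≤ c·h^(θα)·φ(k)^β / (h−k)^α for all h > k ≥ k₀ > 0. Then φ(2L) = 0, where L = max{ 2k₀, c^(1/((1−θ)α)) · φ(k₀)^((β−1)/((1−θ)α)) · 2^((1/((1−θ)β))·(β + θ + 1/(β−1))) }. -/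
open Real Filter

private lemma glog3 {a b d : ℝ} (ha : 0 < a) (hb : 0 < b) (hd : 0 < d) :
    Real.log (a * b * d) = Real.log a + Real.log b + Real.log d := by
  rw [Real.log_mul (by positivity) hd.ne', Real.log_mul ha.ne' hb.ne']

set_option maxHeartbeats 1000000 in
theorem generalized_stampacchia_beta_gt_one
    (c α β θ k₀ : ℝ) (hc : 0 < c) (hα : 0 < α) (hβ : 1 < β)
    (hθ0 : 0 ≤ θ) (hθ1 : θ < 1) (hk₀ : 0 < k₀)
    (φ : ℝ → ℝ)
    (hnonneg : ∀ k, k₀ ≤ k → 0 ≤ φ k)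
    (hmono : AntitoneOn φ (Set.Ici k₀))
    (hdecay : ∀ h k, k₀ ≤ k → k < h → φ h ≤ c * h ^ (θ * α) * φ k ^ β / (h - k) ^ α) :
    φ (2 * max (2 * k₀)
        (c ^ (1 / ((1 - θ) * α)) * φ k₀ ^ ((β - 1) / ((1 - θ) * α)) *
          2 ^ ((1 / ((1 - θ) * β)) * (β + θ + 1 / (β - 1))))) = 0 := by
  set T := c ^ (1 / ((1 - θ) * α)) * φ k₀ ^ ((β - 1) / ((1 - θ) * α)) *
      2 ^ ((1 / ((1 - θ) * β)) * (β + θ + 1 / (β - 1))) with hT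
  set L := max (2 * k₀) T with hLdef
  have hβ1 : (0:ℝ) < β - 1 := by linarith
  have h1θ : (0:ℝ) < 1 - θ := by linarith
  have hp : (0:ℝ) < (1 - θ) * α := by positivity
  set μ := α / (β - 1) with hμ
  have hμpos : 0 < μ := by positivity
  have hL1 : 2 * k₀ ≤ L := le_max_left _ _
  have hLpos : 0 < L := lt_of_lt_of_le (by linarith) hL1
  have hk₀L : k₀ < L := by linarith
  have hLmem : L ∈ Set.Ici k₀ := Set.mem_Ici.mpr hk₀L.le
  have h2Lmem : (2 * L) ∈ Set.Ici k₀ := Set.mem_Ici.mpr (by linarith)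
  have h2Lnn : 0 ≤ φ (2 * L) := hnonneg _ h2Lmem
  rcases le_or_gt (φ L) 0 with hφL | hφL
  · exact le_antisymm ((hmono hLmem h2Lmem (by linarith)).trans hφL) h2Lnn
  have hφk : 0 < φ k₀ := lt_of_lt_of_le hφL (hmono (Set.mem_Ici.mpr le_rfl) hLmem hk₀L.le)
  set lc := Real.log c with hlc
  set l2 := Real.log 2 with hl2
  set lL := Real.log L with hlL
  set lphiL := Real.log (φ L) with hlphiL
  set lphik := Real.log (φ k₀) with hlphik
  -- Step A in log form
  have hA_log : lphiL ≤ lc + θ * α * lL + β * lphik - α * (lL - l2) := by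
    have hgap : L / 2 ≤ L - k₀ := by linarith
    have hden : (L / 2) ^ α ≤ (L - k₀) ^ α :=
      Real.rpow_le_rpow (by positivity) hgap hα.le
    have h1 : φ L ≤ c * L ^ (θ * α) * φ k₀ ^ β / (L / 2) ^ α :=
      (hdecay L k₀ le_rfl hk₀L).trans
        (div_le_div_of_nonneg_left (by positivity) (by positivity) hden)
    have h2 := (Real.log_le_log_iff hφL (by positivity)).mpr h1
    have e1 : Real.log (c * L ^ (θ * α) * φ k₀ ^ β / (L / 2) ^ α)
        = lc + θ * α * lL + β * lphik - α * (lL - l2) := by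
      rw [Real.log_div (by positivity) (by positivity),
          glog3 hc (Real.rpow_pos_of_pos hLpos _) (Real.rpow_pos_of_pos hφk _),
          Real.log_rpow hLpos, Real.log_rpow hφk,
          Real.log_rpow (by positivity : (0:ℝ) < L / 2),
          Real.log_div hLpos.ne' (by norm_num)]
      try ring
    rw [e1] at h2
    exact h2
  -- T ≤ L in log form
  have hT_log : (1 / ((1 - θ) * α)) * lc + ((β - 1) / ((1 - θ) * α)) * lphik
      + ((1 / ((1 - θ) * β)) * (β + θ + 1 / (β - 1))) * l2 ≤ lL := by
    have hTpos : 0 < T := by rw [hT]; positivity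
    have h2 := (Real.log_le_log_iff hTpos hLpos).mpr (le_max_right _ _)
    rw [hT, glog3 (by positivity) (by positivity) (by positivity),
        Real.log_rpow hc, Real.log_rpow hφk, Real.log_rpow (by norm_num : (0:ℝ) < 2)] at h2
    exact h2
  -- Key condition in log form
  have hP_log : lc + θ * α * (l2 + lL) + (β - 1) * lphiL + (μ + α) * l2 ≤ α * lL := by
    have h1 : (β - 1) * lphiL
        ≤ (β - 1) * (lc + θ * α * lL + β * lphik - α * (lL - l2)) :=
      mul_le_mul_of_nonneg_left hA_log (by linarith)
    have h2 : ((1 - θ) * α * β) * ((1 / ((1 - θ) * α)) * lc + ((β - 1) / ((1 - θ) * α)) * lphik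
        + ((1 / ((1 - θ) * β)) * (β + θ + 1 / (β - 1))) * l2)
        ≤ ((1 - θ) * α * β) * lL :=
      mul_le_mul_of_nonneg_left hT_log (by positivity)
    have e2 : ((1 - θ) * α * β) * ((1 / ((1 - θ) * α)) * lc + ((β - 1) / ((1 - θ) * α)) * lphik
        + ((1 / ((1 - θ) * β)) * (β + θ + 1 / (β - 1))) * l2)
        = β * lc + β * (β - 1) * lphik + (α * β + α * θ + μ) * l2 := by
      rw [hμ]; field_simp
    rw [e2] at h2
    nlinarith [h1, h2]
  have hμβ : μ * β = μ + α := by rw [hμ]; field_simp; ring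
  -- the level sequence
  set k : ℕ → ℝ := fun n => 2 * L - L * (2:ℝ) ^ (-(n:ℝ)) with hk
  have hkge : ∀ n : ℕ, L ≤ k n := by
    intro n
    have h2n : (2:ℝ) ^ (-(n:ℝ)) ≤ 1 :=
      Real.rpow_le_one_of_one_le_of_nonpos one_le_two (neg_nonpos.mpr (Nat.cast_nonneg n))
    have := mul_le_mul_of_nonneg_left h2n hLpos.le
    simp only [hk]
    nlinarith
  have hklt : ∀ n : ℕ, k n < 2 * L := by
    intro n
    have h2n : (0:ℝ) < (2:ℝ) ^ (-(n:ℝ)) := Real.rpow_pos_of_pos (by norm_num) _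
    have : 0 < L * (2:ℝ) ^ (-(n:ℝ)) := by positivity
    simp only [hk]
    linarith
  have hkmem : ∀ n : ℕ, k n ∈ Set.Ici k₀ := fun n => Set.mem_Ici.mpr (hk₀L.le.trans (hkge n))
  have hgapeq : ∀ n : ℕ, k (n + 1) - k n = L * (2:ℝ) ^ (-((n:ℝ) + 1)) := by
    intro n
    have e : (2:ℝ) ^ (-(n:ℝ)) = 2 * (2:ℝ) ^ (-((n:ℝ) + 1)) := by
      rw [show -(n:ℝ) = 1 + (-((n:ℝ) + 1)) by ring, Real.rpow_add (by norm_num), Real.rpow_one]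
    simp only [hk]
    push_cast
    rw [e]
    ring
  have hgappos : ∀ n : ℕ, (0:ℝ) < L * (2:ℝ) ^ (-((n:ℝ) + 1)) := by
    intro n
    have : (0:ℝ) < (2:ℝ) ^ (-((n:ℝ) + 1)) := Real.rpow_pos_of_pos (by norm_num) _
    positivity
  -- the iteration
  have claim : ∀ n : ℕ, φ (k n) ≤ φ L * (2:ℝ) ^ (-(n:ℝ) * μ) := by
    intro n
    induction n with
    | zero =>
      have h0 : k 0 = L := by
        simp only [hk, Nat.cast_zero, neg_zero, Real.rpow_zero, mul_one]
        ring
      rw [h0]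
      simp
    | succ n ih =>
      have hkn1 : k n < k (n + 1) := by
        have h1 := hgapeq n
        have h2 := hgappos n
        linarith
      have hd := hdecay (k (n + 1)) (k n) (hkmem n) hkn1
      have hk1pos : 0 < k (n + 1) := hLpos.trans_le (hkge (n + 1))
      have hdenpos : (0:ℝ) < (k (n + 1) - k n) ^ α :=
        Real.rpow_pos_of_pos (by linarith) _
      have step1 : φ (k (n + 1))
          ≤ c * (2 * L) ^ (θ * α) * (φ L * (2:ℝ) ^ (-(n:ℝ) * μ)) ^ β
            / (k (n + 1) - k n) ^ α := by
        refine hd.trans ?_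
        gcongr
        all_goals
          first
            | exact Real.rpow_nonneg (hnonneg _ (hkmem n)) _
            | exact hk1pos.le
            | exact (hklt (n + 1)).le
            | exact hnonneg _ (hkmem n)
            | exact ih
            | positivity
            | linarith
      have hz : (0:ℝ) < (2:ℝ) ^ (-(n:ℝ) * μ) := Real.rpow_pos_of_pos (by norm_num) _
      have hz2 : (0:ℝ) < (2:ℝ) ^ (-((n:ℝ) + 1) * μ) := Real.rpow_pos_of_pos (by norm_num) _
      have step2 : c * (2 * L) ^ (θ * α) * (φ L * (2:ℝ) ^ (-(n:ℝ) * μ)) ^ β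
            / (k (n + 1) - k n) ^ α
          ≤ φ L * (2:ℝ) ^ (-((n:ℝ) + 1) * μ) := by
        rw [hgapeq n, div_le_iff₀ (Real.rpow_pos_of_pos (hgappos n) _)]
        rw [← Real.log_le_log_iff (by positivity) (by positivity)]
        have eL : Real.log (c * (2 * L) ^ (θ * α) * (φ L * (2:ℝ) ^ (-(n:ℝ) * μ)) ^ β)
            = lc + θ * α * (l2 + lL) + β * (lphiL + (-(n:ℝ) * μ) * l2) := by
          rw [glog3 hc (Real.rpow_pos_of_pos (by linarith) _) (Real.rpow_pos_of_pos (by positivity) _),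
              Real.log_rpow (by linarith : (0:ℝ) < 2 * L),
              Real.log_rpow (by positivity : (0:ℝ) < φ L * (2:ℝ) ^ (-(n:ℝ) * μ)),
              Real.log_mul hφL.ne' hz.ne', Real.log_mul (by norm_num : (2:ℝ) ≠ 0) hLpos.ne',
              Real.log_rpow (by norm_num : (0:ℝ) < 2)]
        have eR : Real.log (φ L * (2:ℝ) ^ (-((n:ℝ) + 1) * μ) * (L * (2:ℝ) ^ (-((n:ℝ) + 1))) ^ α)
            = lphiL + (-((n:ℝ) + 1) * μ) * l2 + α * (lL + (-((n:ℝ) + 1)) * l2) := by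
          rw [glog3 hφL hz2 (Real.rpow_pos_of_pos (hgappos n) _),
              Real.log_rpow (by norm_num : (0:ℝ) < 2),
              Real.log_rpow (hgappos n),
              Real.log_mul hLpos.ne' (Real.rpow_pos_of_pos (by norm_num : (0:ℝ) < 2) _).ne',
              Real.log_rpow (by norm_num : (0:ℝ) < 2)]
        rw [eL, eR]
        have hmm : (n:ℝ) * (μ * β) * l2 = ((n:ℝ) * μ + (n:ℝ) * α) * l2 := by rw [hμβ]; ring
        nlinarith [hP_log, hmm]
      have := step1.trans step2
      have ecast : (-(((n:ℕ) + 1 : ℕ) : ℝ)) * μ = -((n:ℝ) + 1) * μ := by push_cast; ring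
      rw [ecast]
      exact this
  -- pass to the limit
  have hr0 : (0:ℝ) ≤ (2:ℝ) ^ (-μ) := (Real.rpow_pos_of_pos (by norm_num) _).le
  have hr1 : (2:ℝ) ^ (-μ) < 1 :=
    Real.rpow_lt_one_of_one_lt_of_neg (by norm_num) (by linarith)
  have hlim : Tendsto (fun n : ℕ => φ L * ((2:ℝ) ^ (-μ)) ^ n) atTop (nhds 0) := by
    have := (tendsto_pow_atTop_nhds_zero_of_lt_one hr0 hr1).const_mul (φ L)
    simpa using this
  have hbound : ∀ n : ℕ, φ (2 * L) ≤ φ L * ((2:ℝ) ^ (-μ)) ^ n := by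
    intro n
    have h1 : φ (2 * L) ≤ φ (k n) := hmono (hkmem n) h2Lmem (hklt n).le
    have h2 : ((2:ℝ) ^ (-μ)) ^ n = (2:ℝ) ^ (-(n:ℝ) * μ) := by
      rw [← Real.rpow_natCast ((2:ℝ) ^ (-μ)) n, ← Real.rpow_mul (by norm_num : (0:ℝ) ≤ 2)]
      ring_nf
    rw [h2]
    exact h1.trans (claim n)
  exact le_antisymm (ge_of_tendsto' hlim hbound) h2Lnn
end

section
/- Let c, α, k₀ be positive constants, 0 < β < 1, and 0 ≤ θ < 1. Let φ : [k₀, ∞) → [0, ∞) be nonincreasing and satisfy φ(h) ≤ c·h^(θα)·φ(k)^β / (h−k)^α for all h > k ≥ k₀ > 0. Then for every k ≥ k₀, φ(k) ≤ 2^((1−θ)α/(1−β)²) · ( (c₁·2^(θα))^(1/(1−β)) + (2k₀)^((1−θ)α/(1−β))·φ(k₀) ) · (1/k)^(α(1−θ)/(1−β)), where c₁ = max{ 4^((1−θ)α)·c·2^(θα), c₂^(1−β) } and c₂ = 2^((1−θ)α/(1−β)²)·( (c·2^(θα))^(1/(1−β)) + (2k₀)^((1−θ)α/(1−β))·φ(k₀)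 ). -/
open Real

set_option maxHeartbeats 1000000

theorem generalized_stampacchia_beta_lt_one
    (c α β θ k₀ : ℝ) (hc : 0 < c) (hα : 0 < α) (hβ0 : 0 < β) (hβ1 : β < 1)
    (hθ0 : 0 ≤ θ) (hθ1 : θ < 1) (hk₀ : 0 < k₀)
    (φ : ℝ → ℝ)
    (hnonneg : ∀ k, k₀ ≤ k → 0 ≤ φ k)
    (hmono : AntitoneOn φ (Set.Ici k₀))
    (hdecay : ∀ h k, k₀ ≤ k → k < h → φ h ≤ c * h ^ (θ * α) * φ k ^ β / (h - k) ^ α) :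
    ∀ k, k₀ ≤ k →
      φ k ≤ 2 ^ ((1 - θ) * α / (1 - β) ^ 2) *
        ((max (4 ^ ((1 - θ) * α) * c * 2 ^ (θ * α))
            ((2 ^ ((1 - θ) * α / (1 - β) ^ 2) *
              ((c * 2 ^ (θ * α)) ^ (1 / (1 - β)) +
                (2 * k₀) ^ ((1 - θ) * α / (1 - β)) * φ k₀)) ^ (1 - β)) *
          2 ^ (θ * α)) ^ (1 / (1 - β)) +
          (2 * k₀) ^ ((1 - θ) * α / (1 - β)) * φ k₀) *
        (1 / k) ^ (α * (1 - θ) / (1 - β)) := by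
  intro k hk
  have hk0 : 0 < k := lt_of_lt_of_le hk₀ hk
  have h1β : (0:ℝ) < 1 - β := by linarith
  have h1θ : (0:ℝ) < 1 - θ := by linarith
  have hθα : (0:ℝ) ≤ θ * α := mul_nonneg hθ0 hα.le
  set γ : ℝ := (1 - θ) * α / (1 - β) with hγdef
  have hγ : 0 < γ := div_pos (mul_pos h1θ hα) h1β
  have e1 : (1 - θ) * α / (1 - β) ^ 2 = γ / (1 - β) := by rw [hγdef, div_div, ← sq]
  have e2 : α * (1 - θ) / (1 - β) = γ := by rw [hγdef]; ring
  rw [e1, e2]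
  set A : ℝ := c * 2 ^ (θ * α) * 2 ^ γ with hAdef
  have hApos : 0 < A := by positivity
  have hψnn : ∀ x, k₀ ≤ x → 0 ≤ x ^ γ * φ x := fun x hx =>
    mul_nonneg (Real.rpow_nonneg (le_trans hk₀.le hx) γ) (hnonneg x hx)
  -- the key one-step estimate
  have hstep : ∀ x, k₀ ≤ x → (2*x) ^ γ * φ (2*x) ≤ A * (x ^ γ * φ x) ^ β := by
    intro x hx
    have hx0 : 0 < x := lt_of_lt_of_le hk₀ hx
    have hd := hdecay (2*x) x hx (by linarith)
    rw [show 2*x - x = x by ring] at hd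
    have hxα : (0:ℝ) < x ^ α := Real.rpow_pos_of_pos hx0 α
    have hxe : x ^ (γ*β) = x ^ γ * x ^ (θ*α) / x ^ α := by
      rw [← Real.rpow_add hx0, ← Real.rpow_sub hx0]
      congr 1
      rw [hγdef]
      field_simp
      ring
    have key : (2*x) ^ γ * (c * (2*x) ^ (θ*α) * φ x ^ β / x ^ α)
        = A * (x ^ γ * φ x) ^ β := by
      rw [Real.mul_rpow (by norm_num : (0:ℝ) ≤ 2) hx0.le,
          Real.mul_rpow (by norm_num : (0:ℝ) ≤ 2) hx0.le,
          Real.mul_rpow (Real.rpow_nonneg hx0.le γ) (hnonneg x hx),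
          ← Real.rpow_mul hx0.le, hxe, hAdef]
      field_simp
    calc (2*x) ^ γ * φ (2*x)
        ≤ (2*x) ^ γ * (c * (2*x) ^ (θ*α) * φ x ^ β / x ^ α) :=
          mul_le_mul_of_nonneg_left hd (Real.rpow_nonneg (by linarith) γ)
      _ = A * (x ^ γ * φ x) ^ β := key
  -- iteration bound
  set M : ℝ := max (A ^ (1/(1-β))) (k₀ ^ γ * φ k₀) with hMdef
  have hM0 : 0 ≤ M := le_trans (Real.rpow_nonneg hApos.le _) (le_max_left _ _)
  have hMpos : 0 < M := lt_of_lt_of_le (Real.rpow_pos_of_pos hApos _) (le_max_left _ _)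
  have hexp : (1/(1-β)) * (1-β) = 1 := by field_simp
  have hAM : A ≤ M ^ (1-β) := by
    calc A = (A ^ (1/(1-β))) ^ (1-β) := by
            rw [← Real.rpow_mul hApos.le, hexp, Real.rpow_one]
      _ ≤ M ^ (1-β) :=
          Real.rpow_le_rpow (Real.rpow_nonneg hApos.le _) (le_max_left _ _) h1β.le
  have hiter : ∀ n : ℕ, ((2:ℝ)^n * k₀) ^ γ * φ ((2:ℝ)^n * k₀) ≤ M := by
    intro n
    induction n with
    | zero => simp only [pow_zero, one_mul]; exact le_max_right _ _
    | succ n ih =>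
      have hge : k₀ ≤ (2:ℝ)^n * k₀ :=
        le_mul_of_one_le_left hk₀.le (one_le_pow₀ one_le_two)
      have h1 : ((2:ℝ)^(n+1) * k₀) = 2 * ((2:ℝ)^n * k₀) := by ring
      rw [h1]
      calc (2 * ((2:ℝ)^n * k₀)) ^ γ * φ (2 * ((2:ℝ)^n * k₀))
          ≤ A * (((2:ℝ)^n * k₀) ^ γ * φ ((2:ℝ)^n * k₀)) ^ β := hstep _ hge
        _ ≤ A * M ^ β := mul_le_mul_of_nonneg_left
            (Real.rpow_le_rpow (hψnn _ hge) ih hβ0.le) hApos.le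
        _ ≤ M ^ (1-β) * M ^ β := mul_le_mul_of_nonneg_right hAM (Real.rpow_nonneg hM0 β)
        _ = M := by rw [← Real.rpow_add hMpos]; norm_num
  -- dyadic localization
  set n : ℕ := ⌊Real.logb 2 (k / k₀)⌋₊ with hndef
  have hkk : 1 ≤ k / k₀ := (one_le_div hk₀).mpr hk
  have hlogb : 0 ≤ Real.logb 2 (k/k₀) := Real.logb_nonneg one_lt_two hkk
  have hlow : (2:ℝ)^n * k₀ ≤ k := by
    have h1 : ((n:ℝ)) ≤ Real.logb 2 (k/k₀) := Nat.floor_le hlogb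
    have h2 : (2:ℝ)^(n:ℝ) ≤ (2:ℝ) ^ Real.logb 2 (k/k₀) :=
      Real.rpow_le_rpow_of_exponent_le one_le_two h1
    rw [Real.rpow_logb (by positivity) (by norm_num) (by positivity)] at h2
    rw [Real.rpow_natCast] at h2
    calc (2:ℝ)^n * k₀ ≤ (k/k₀) * k₀ := mul_le_mul_of_nonneg_right h2 hk₀.le
      _ = k := div_mul_cancel₀ k hk₀.ne'
  have hhigh : k < 2 * ((2:ℝ)^n * k₀) := by
    have h1 : Real.logb 2 (k/k₀) < n + 1 := Nat.lt_floor_add_one _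
    have h2 : (2:ℝ) ^ Real.logb 2 (k/k₀) < (2:ℝ) ^ ((n:ℝ)+1) :=
      Real.rpow_lt_rpow_of_exponent_lt one_lt_two h1
    rw [Real.rpow_logb (by positivity) (by norm_num) (by positivity)] at h2
    have h3 : (2:ℝ) ^ ((n:ℝ)+1) = 2 * (2:ℝ)^n := by
      rw [Real.rpow_add two_pos, Real.rpow_natCast, Real.rpow_one]; ring
    rw [h3] at h2
    calc k = (k/k₀) * k₀ := (div_mul_cancel₀ k hk₀.ne').symm
      _ < (2 * (2:ℝ)^n) * k₀ := mul_lt_mul_of_pos_right h2 hk₀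
      _ = 2 * ((2:ℝ)^n * k₀) := by ring
  have hge : k₀ ≤ (2:ℝ)^n * k₀ :=
    le_mul_of_one_le_left hk₀.le (one_le_pow₀ one_le_two)
  have hφ1 : φ k ≤ φ ((2:ℝ)^n * k₀) :=
    hmono (Set.mem_Ici.mpr hge) (Set.mem_Ici.mpr hk) hlow
  have hq : (0:ℝ) < ((2:ℝ)^n * k₀) ^ γ := Real.rpow_pos_of_pos (by positivity) γ
  have hφ2 : φ ((2:ℝ)^n * k₀) ≤ M / ((2:ℝ)^n * k₀) ^ γ := by
    rw [le_div_iff₀ hq, mul_comm]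
    exact hiter n
  have hhalf : k/2 < (2:ℝ)^n * k₀ := by linarith
  have hkγ : (k/2)^γ ≤ ((2:ℝ)^n*k₀)^γ :=
    Real.rpow_le_rpow (by positivity) hhalf.le hγ.le
  have hdivle : M / ((2:ℝ)^n*k₀)^γ ≤ M / (k/2)^γ :=
    div_le_div_of_nonneg_left hM0 (Real.rpow_pos_of_pos (by positivity) γ) hkγ
  have hfin : M / ((k/2)^γ) = 2^γ * M * (1/k)^γ := by
    rw [Real.div_rpow hk0.le (by norm_num : (0:ℝ) ≤ 2),
        Real.div_rpow (by norm_num : (0:ℝ) ≤ 1) hk0.le, Real.one_rpow]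
    have hkγ0 : (0:ℝ) < k^γ := Real.rpow_pos_of_pos hk0 γ
    have h2γ0 : (0:ℝ) < (2:ℝ)^γ := Real.rpow_pos_of_pos two_pos γ
    field_simp
  have hchain : φ k ≤ 2^γ * M * (1/k)^γ := by
    calc φ k ≤ φ ((2:ℝ)^n * k₀) := hφ1
      _ ≤ M / ((2:ℝ)^n * k₀) ^ γ := hφ2
      _ ≤ M / (k/2)^γ := hdivle
      _ = 2^γ * M * (1/k)^γ := hfin
  -- compare constants
  refine le_trans hchain (mul_le_mul_of_nonneg_right ?_ (Real.rpow_nonneg (by positivity) γ))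
  set Y : ℝ := 2 ^ (γ/(1-β)) *
      ((c * 2 ^ (θ*α)) ^ (1/(1-β)) + (2 * k₀) ^ γ * φ k₀) with hYdef
  set B : ℝ := max (4 ^ ((1-θ)*α) * c * 2 ^ (θ*α)) (Y ^ (1-β)) * 2 ^ (θ*α) with hBdef
  have hA' : A ^ (1/(1-β)) = 2^(γ/(1-β)) * (c * 2^(θ*α))^(1/(1-β)) := by
    rw [hAdef, Real.mul_rpow (by positivity) (by positivity),
        ← Real.rpow_mul (by norm_num : (0:ℝ) ≤ 2), mul_one_div]
    ring
  have hT2 : (0:ℝ) ≤ (2 * k₀) ^ γ * φ k₀ :=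
    mul_nonneg (Real.rpow_nonneg (by positivity) _) (hnonneg k₀ le_rfl)
  have hAY : A ^ (1/(1-β)) ≤ Y := by
    rw [hA', hYdef]
    exact mul_le_mul_of_nonneg_left (le_add_of_nonneg_right hT2)
      (Real.rpow_nonneg (by norm_num) _)
  have hAYb : A ≤ Y ^ (1-β) := by
    calc A = (A ^ (1/(1-β))) ^ (1-β) := by
          rw [← Real.rpow_mul hApos.le, hexp, Real.rpow_one]
      _ ≤ Y ^ (1-β) := Real.rpow_le_rpow (Real.rpow_nonneg hApos.le _) hAY h1β.le
  have h2θ1 : (1:ℝ) ≤ 2 ^ (θ*α) := by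
    calc (1:ℝ) = (2:ℝ) ^ (0:ℝ) := (Real.rpow_zero 2).symm
      _ ≤ 2 ^ (θ*α) := Real.rpow_le_rpow_of_exponent_le one_le_two hθα
  have hAB : A ≤ B := by
    calc A ≤ max (4 ^ ((1-θ)*α) * c * 2 ^ (θ*α)) (Y ^ (1-β)) :=
          le_trans hAYb (le_max_right _ _)
      _ ≤ B := le_mul_of_one_le_right
          (le_trans hApos.le (le_trans hAYb (le_max_right _ _))) h2θ1
  have hBpos : 0 < B := lt_of_lt_of_le hApos hAB
  have hMsum : M ≤ A ^ (1/(1-β)) + k₀ ^ γ * φ k₀ :=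
    max_le (le_add_of_nonneg_right (hψnn k₀ le_rfl))
      (le_add_of_nonneg_left (Real.rpow_nonneg hApos.le _))
  have h2k₀ : (2 * k₀) ^ γ = 2^γ * k₀^γ :=
    Real.mul_rpow (by norm_num) hk₀.le
  have h21 : (1:ℝ) ≤ 2^(γ/(1-β)) := by
    calc (1:ℝ) = (2:ℝ) ^ (0:ℝ) := (Real.rpow_zero 2).symm
      _ ≤ 2 ^ (γ/(1-β)) := Real.rpow_le_rpow_of_exponent_le one_le_two (by positivity)
  have part1 : 2^γ * A^(1/(1-β)) ≤ 2^(γ/(1-β)) * B^(1/(1-β)) := by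
    have ha : 2^γ * A^(1/(1-β)) = (2^(γ*(1-β)) * A)^(1/(1-β)) := by
      rw [Real.mul_rpow (by positivity) hApos.le,
          ← Real.rpow_mul (by norm_num : (0:ℝ) ≤ 2)]
      congr 2
      field_simp
    have hb : 2^(γ/(1-β)) * B^(1/(1-β)) = (2^γ * B)^(1/(1-β)) := by
      rw [Real.mul_rpow (by positivity) hBpos.le,
          ← Real.rpow_mul (by norm_num : (0:ℝ) ≤ 2), mul_one_div]
    rw [ha, hb]
    apply Real.rpow_le_rpow (by positivity) _ (by positivity)
    have h2exp : (2:ℝ)^(γ*(1-β)) ≤ 2^γ :=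
      Real.rpow_le_rpow_of_exponent_le one_le_two
        (by have h := mul_nonneg hγ.le hβ0.le
            have he : γ*(1-β) = γ - γ*β := by ring
            linarith)
    exact mul_le_mul h2exp hAB hApos.le (Real.rpow_nonneg (by norm_num) γ)
  have part2 : 2^γ * (k₀ ^ γ * φ k₀) ≤ 2^(γ/(1-β)) * ((2 * k₀) ^ γ * φ k₀) := by
    rw [h2k₀]
    calc 2^γ * (k₀ ^ γ * φ k₀) = 1 * (2^γ * k₀^γ * φ k₀) := by ring
      _ ≤ 2^(γ/(1-β)) * (2^γ * k₀^γ * φ k₀) := by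
          apply mul_le_mul_of_nonneg_right h21
          exact mul_nonneg (mul_nonneg (by positivity) (by positivity)) (hnonneg k₀ le_rfl)
  calc 2^γ * M ≤ 2^γ * (A ^ (1/(1-β)) + k₀ ^ γ * φ k₀) :=
        mul_le_mul_of_nonneg_left hMsum (by positivity)
    _ = 2^γ * A^(1/(1-β)) + 2^γ * (k₀ ^ γ * φ k₀) := by ring
    _ ≤ 2^(γ/(1-β)) * B^(1/(1-β)) + 2^(γ/(1-β)) * ((2 * k₀) ^ γ * φ k₀) :=
        add_le_add part1 part2
    _ = 2^(γ/(1-β)) * (B^(1/(1-β)) + (2 * k₀) ^ γ * φ k₀) := by ring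
end

section
/- Let c₃, α̃, k₀ be positive constants and 0 < β < 1. Let φ : [k₀, ∞) → [0, ∞) be nonincreasing and satisfy φ(2k) ≤ c₃·φ(k)^β / k^α̃ for every k ≥ k₀. Then for every h > k ≥ k₀, φ(h) ≤ c₄·φ(k)^β / (h−k)^α̃, where c₄ = max{ 4^α̃·c₃, c₅^(1−β) } and c₅ = 2^(α̃/(1−β)²)·( c₃^(1/(1−β)) + (2k₀)^(α̃/(1−β))·φ(k₀) ). -/
/-!
Put `μ = α / (1 - β)` and `A t = t ^ μ * φ t`. The doubling inequality becomes the recursion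
`A (2 s) ≤ 2 ^ μ * c₃ * A s ^ β`, and `c₅` is chosen so that `2 ^ μ * c₃ ≤ c₅ ^ (1 - β)`, i.e.
`2 ^ μ * c₃ * c₅ ^ β ≤ c₅`, and `A ≤ c₅` on `[k₀, 2 k₀]`; induction over the dyadic intervals
`[k₀, 2 ^ n k₀]` gives `A ≤ c₅` on all of `[k₀, ∞)`. For `h ≥ 2 k` the doubling inequality at `h / 2`
already gives the claim with constant `2 ^ α * c₃`. For `k < h < 2 k`, monotonicity and the decay of
`A` give `φ h ≤ φ k = φ k ^ β * φ k ^ (1 - β) ≤ φ k ^ β * (c₅ / k ^ μ) ^ (1 - β)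
= c₅ ^ (1 - β) * φ k ^ β / k ^ α`, and `h - k < k`.
-/

open Real Set

theorem induction_on_Ici_of_half {a : ℝ} (ha : 0 < a) {P : ℝ → Prop}
    (base : ∀ t ∈ Icc a (2 * a), P t) (step : ∀ t, 2 * a ≤ t → P (t / 2) → P t) :
    ∀ t, a ≤ t → P t := by
  have bands : ∀ n : ℕ, ∀ t ∈ Icc a (2 ^ n * a), P t := by
    intro n
    induction n with
    | zero => exact fun t ht => base t ⟨ht.1, by linarith [ht.2]⟩
    | succ n ih =>
      rintro t ⟨hat, htn⟩
      rcases le_or_gt t (2 * a) with hta | hta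
      · exact base t ⟨hat, hta⟩
      · exact step t hta.le (ih _ ⟨by linarith, by rw [pow_succ] at htn; linarith⟩)
  intro t ht
  obtain ⟨n, hn⟩ := pow_unbounded_of_one_lt (t / a) one_lt_two
  exact bands n t ⟨ht, ((div_lt_iff₀ ha).1 hn).le⟩

theorem mul_rpow_le_of_le_rpow_one_sub {C M β : ℝ} (hM : 0 ≤ M) (hC : C ≤ M ^ (1 - β)) :
    C * M ^ β ≤ M := calc
  C * M ^ β ≤ M ^ (1 - β) * M ^ β := by gcongr
  _ = M := by rw [← rpow_add' hM (by norm_num), sub_add_cancel, rpow_one]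

theorem rpow_mul_le_rpow_one_sub {a c D α β : ℝ} (ha : 0 ≤ a) (hc : 0 ≤ c) (hD : 0 ≤ D)
    (hβ1 : β < 1) :
    a ^ (α / (1 - β)) * c ≤ (a ^ (α / (1 - β) ^ 2) * (c ^ (1 / (1 - β)) + D)) ^ (1 - β) := by
  have h1β : 0 < 1 - β := sub_pos.2 hβ1
  calc a ^ (α / (1 - β)) * c = (a ^ (α / (1 - β) ^ 2) * c ^ (1 / (1 - β))) ^ (1 - β) := by
        rw [mul_rpow (by positivity) (by positivity), ← rpow_mul ha, ← rpow_mul hc]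
        field_simp
        rw [rpow_one]
    _ ≤ (a ^ (α / (1 - β) ^ 2) * (c ^ (1 / (1 - β)) + D)) ^ (1 - β) := by
        gcongr
        linarith

theorem rpow_mul_le_mul_rpow_of_le_div_rpow {α β c s x y : ℝ} (hβ : β < 1) (hs : 0 < s)
    (hx : 0 ≤ x) (hy : y ≤ c * x ^ β / s ^ α) :
    (2 * s) ^ (α / (1 - β)) * y ≤ 2 ^ (α / (1 - β)) * c * (s ^ (α / (1 - β)) * x) ^ β := by
  have hexp : α / (1 - β) * β = α / (1 - β) - α := by
    field_simp [(sub_pos.2 hβ).ne']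
    ring
  have hsμ : (s ^ (α / (1 - β))) ^ β = s ^ (α / (1 - β)) / s ^ α := by
    rw [← rpow_mul hs.le, hexp, rpow_sub hs]
  calc (2 * s) ^ (α / (1 - β)) * y ≤ (2 * s) ^ (α / (1 - β)) * (c * x ^ β / s ^ α) := by
        gcongr
    _ = 2 ^ (α / (1 - β)) * c * (s ^ (α / (1 - β)) * x) ^ β := by
        rw [mul_rpow (by positivity) hx, hsμ, mul_rpow zero_le_two hs.le]
        ring

theorem rpow_mul_le_of_doubling {c₃ α k₀ β M : ℝ} {φ : ℝ → ℝ} (hc₃ : 0 ≤ c₃) (hα : 0 ≤ α)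
    (hk₀ : 0 < k₀) (hβ0 : 0 ≤ β) (hβ1 : β < 1)
    (hnonneg : ∀ k, k₀ ≤ k → 0 ≤ φ k) (hmono : AntitoneOn φ (Ici k₀))
    (hdouble : ∀ k, k₀ ≤ k → φ (2 * k) ≤ c₃ * φ k ^ β / k ^ α)
    (hM : 2 ^ (α / (1 - β)) * c₃ ≤ M ^ (1 - β)) (hM₀ : (2 * k₀) ^ (α / (1 - β)) * φ k₀ ≤ M) :
    ∀ t, k₀ ≤ t → t ^ (α / (1 - β)) * φ t ≤ M := by
  refine induction_on_Ici_of_half hk₀ (fun t ⟨hk₀t, ht⟩ => ?_) fun t ht ih => ?_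
  · have := hnonneg t hk₀t
    calc t ^ (α / (1 - β)) * φ t ≤ (2 * k₀) ^ (α / (1 - β)) * φ k₀ := by
          gcongr
          · linarith
          · exact hmono (mem_Ici.2 le_rfl) (mem_Ici.2 hk₀t) hk₀t
      _ ≤ M := hM₀
  · have hs : k₀ ≤ t / 2 := by linarith
    have hA : 0 ≤ (t / 2) ^ (α / (1 - β)) * φ (t / 2) :=
      mul_nonneg (rpow_nonneg (by linarith) _) (hnonneg _ hs)
    calc t ^ (α / (1 - β)) * φ t
        = (2 * (t / 2)) ^ (α / (1 - β)) * φ (2 * (t / 2)) := by rw [mul_div_cancel₀ t two_ne_zero]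
      _ ≤ 2 ^ (α / (1 - β)) * c₃ * ((t / 2) ^ (α / (1 - β)) * φ (t / 2)) ^ β :=
        rpow_mul_le_mul_rpow_of_le_div_rpow hβ1 (by linarith) (hnonneg _ hs) (hdouble _ hs)
      _ ≤ 2 ^ (α / (1 - β)) * c₃ * M ^ β := by gcongr
      _ ≤ M := mul_rpow_le_of_le_rpow_one_sub (hA.trans ih) hM

theorem le_two_rpow_mul_div_of_two_mul_le {c₃ α k₀ β h k : ℝ} {φ : ℝ → ℝ} (hc₃ : 0 ≤ c₃)
    (hα : 0 ≤ α) (hk₀ : 0 < k₀) (hβ0 : 0 ≤ β)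
    (hnonneg : ∀ k, k₀ ≤ k → 0 ≤ φ k) (hmono : AntitoneOn φ (Ici k₀))
    (hdouble : ∀ k, k₀ ≤ k → φ (2 * k) ≤ c₃ * φ k ^ β / k ^ α) (hk : k₀ ≤ k) (hkh : 2 * k ≤ h) :
    φ h ≤ 2 ^ α * c₃ * φ k ^ β / (h - k) ^ α := by
  have hkh' : k ≤ h / 2 := by linarith
  have hs : k₀ ≤ h / 2 := hk.trans hkh'
  calc φ h = φ (2 * (h / 2)) := by rw [mul_div_cancel₀ h two_ne_zero]
    _ ≤ c₃ * φ (h / 2) ^ β / (h / 2) ^ α := hdouble _ hs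
    _ ≤ c₃ * φ k ^ β / (h / 2) ^ α := by
        have := hnonneg _ hs
        have : 0 ≤ (h / 2) ^ α := rpow_nonneg (by linarith) α
        gcongr
        exact hmono (mem_Ici.2 hk) (mem_Ici.2 hs) hkh'
    _ = 2 ^ α * c₃ * φ k ^ β / h ^ α := by
        rw [div_rpow (by linarith) zero_le_two]
        field_simp
    _ ≤ 2 ^ α * c₃ * φ k ^ β / (h - k) ^ α := by
        have := hnonneg _ hk
        have : 0 < (h - k) ^ α := rpow_pos_of_pos (by linarith) α
        gcongr
        · linarith
        · linarith

theorem le_rpow_one_sub_mul_div_of_le_two_mul {α β k h x y M : ℝ} (hα : 0 ≤ α) (hβ1 : β < 1)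
    (hx : 0 ≤ x) (hyx : y ≤ x) (hkh : k < h) (hhk : h ≤ 2 * k)
    (hM : k ^ (α / (1 - β)) * x ≤ M) :
    y ≤ M ^ (1 - β) * x ^ β / (h - k) ^ α := by
  have hk : 0 < k := by linarith
  have hkμ : 0 < k ^ (α / (1 - β)) := rpow_pos_of_pos hk _
  have hM0 : 0 ≤ M := (mul_nonneg hkμ.le hx).trans hM
  have hxM : x ≤ M / k ^ (α / (1 - β)) := by rw [le_div_iff₀ hkμ]; linarith
  calc y ≤ x := hyx
    _ = x ^ β * x ^ (1 - β) := by rw [← rpow_add' hx (by norm_num), add_sub_cancel, rpow_one]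
    _ ≤ x ^ β * (M / k ^ (α / (1 - β))) ^ (1 - β) := by gcongr
    _ = M ^ (1 - β) * x ^ β / k ^ α := by
        rw [div_rpow hM0 hkμ.le, ← rpow_mul hk.le, div_mul_cancel₀ α (sub_pos.2 hβ1).ne']
        ring
    _ ≤ M ^ (1 - β) * x ^ β / (h - k) ^ α := by
        gcongr
        linarith

theorem doubling_to_stampacchia
    (c₃ α k₀ β : ℝ) (hc₃ : 0 < c₃) (hα : 0 < α) (hk₀ : 0 < k₀)
    (hβ0 : 0 < β) (hβ1 : β < 1)
    (φ : ℝ → ℝ)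
    (hnonneg : ∀ k, k₀ ≤ k → 0 ≤ φ k)
    (hmono : AntitoneOn φ (Set.Ici k₀))
    (hdouble : ∀ k, k₀ ≤ k → φ (2 * k) ≤ c₃ * φ k ^ β / k ^ α) :
    ∀ h k, k₀ ≤ k → k < h →
      φ h ≤ (max (4 ^ α * c₃)
          ((2 ^ (α / (1 - β) ^ 2) *
            (c₃ ^ (1 / (1 - β)) + (2 * k₀) ^ (α / (1 - β)) * φ k₀)) ^ (1 - β))) *
        φ k ^ β / (h - k) ^ α := by
  set c₅ := (2 : ℝ) ^ (α / (1 - β) ^ 2) *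
    (c₃ ^ (1 / (1 - β)) + (2 * k₀) ^ (α / (1 - β)) * φ k₀)
  have hφk₀ : 0 ≤ (2 * k₀) ^ (α / (1 - β)) * φ k₀ :=
    mul_nonneg (rpow_nonneg (by linarith) _) (hnonneg k₀ le_rfl)
  have hc₅ : (2 * k₀) ^ (α / (1 - β)) * φ k₀ ≤ c₅ := by
    have : 1 ≤ (2 : ℝ) ^ (α / (1 - β) ^ 2) := one_le_rpow one_le_two (by positivity)
    have : 0 ≤ c₃ ^ (1 / (1 - β)) := rpow_nonneg hc₃.le _
    nlinarith
  have hdecay := rpow_mul_le_of_doubling hc₃.le hα.le hk₀ hβ0.le hβ1 hnonneg hmono hdouble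
    (rpow_mul_le_rpow_one_sub zero_le_two hc₃.le hφk₀ hβ1) hc₅
  intro h k hk hkh
  have hφk : 0 ≤ φ k := hnonneg k hk
  rcases le_or_gt (2 * k) h with hfar | hnear
  · calc φ h ≤ 2 ^ α * c₃ * φ k ^ β / (h - k) ^ α :=
          le_two_rpow_mul_div_of_two_mul_le hc₃.le hα.le hk₀ hβ0.le hnonneg hmono hdouble hk hfar
      _ ≤ _ := by
          have : 0 < (h - k) ^ α := rpow_pos_of_pos (by linarith) α
          gcongr
          exact le_max_of_le_left (by gcongr; norm_num)
  · calc φ h ≤ c₅ ^ (1 - β) * φ k ^ β / (h - k) ^ α :=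
          le_rpow_one_sub_mul_div_of_le_two_mul hα.le hβ1 hφk
            (hmono (mem_Ici.2 hk) (mem_Ici.2 (by linarith)) hkh.le) hkh hnear.le (hdecay k hk)
      _ ≤ _ := by
          have : 0 < (h - k) ^ α := rpow_pos_of_pos (by linarith) α
          gcongr
          exact le_max_right _ _
end

section
/- Let c, α, β, k₀ be positive constants, 0 ≤ θ < 1, and β > 1. Let φ : [k₀, ∞) → [0, ∞) be nonincreasing and satisfy φ(h) ≤ c·k^(θα)·φ(k)^β / (h−k)^α for all h > k ≥ k₀ > 0. Then there exists k* > k₀ such that φ(k*) = 0. -/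
open Real

private lemma kv_aux (c α β θ γ K D : ℝ) (n : ℕ) (hc : 0 < c) (hK : 0 < K) (hD : 0 < D)
    (hγmul : γ * (β - 1) = α)
    (hsmall : c * 2 ^ ((θ + 1) * α) * D ^ (β - 1) * K ^ ((θ - 1) * α) ≤ (2:ℝ) ^ (-γ)) :
    c * (2 * K) ^ (θ * α) * (D * ((2:ℝ) ^ (-γ)) ^ n) ^ β
      ≤ D * ((2:ℝ) ^ (-γ)) ^ (n + 1) * (K * (2:ℝ)⁻¹ ^ (n + 1)) ^ α := by
  have hρ : (0:ℝ) < (2:ℝ) ^ (-γ) := Real.rpow_pos_of_pos two_pos _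
  have hL : (0:ℝ) < c * (2 * K) ^ (θ * α) * (D * ((2:ℝ) ^ (-γ)) ^ n) ^ β := by positivity
  have hR : (0:ℝ) < D * ((2:ℝ) ^ (-γ)) ^ (n + 1) * (K * (2:ℝ)⁻¹ ^ (n + 1)) ^ α := by
    positivity
  rw [← Real.log_le_log_iff hL hR]
  have l1 : Real.log (c * (2 * K) ^ (θ * α) * (D * ((2:ℝ) ^ (-γ)) ^ n) ^ β)
      = Real.log c + θ * α * (Real.log 2 + Real.log K)
        + β * (Real.log D + n * (-γ * Real.log 2)) := by
    rw [Real.log_mul (by positivity) (by positivity),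
        Real.log_mul (by positivity) (by positivity),
        Real.log_rpow (by positivity), Real.log_rpow (by positivity),
        Real.log_mul (by positivity) (by positivity),
        Real.log_mul (by positivity) (by positivity),
        Real.log_pow, Real.log_rpow two_pos]
  have l2 : Real.log (D * ((2:ℝ) ^ (-γ)) ^ (n + 1) * (K * (2:ℝ)⁻¹ ^ (n + 1)) ^ α)
      = Real.log D + ((n:ℝ) + 1) * (-γ * Real.log 2)
        + α * (Real.log K + ((n:ℝ) + 1) * (-Real.log 2)) := by
    rw [Real.log_mul (by positivity) (by positivity),
        Real.log_mul (by positivity) (by positivity),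
        Real.log_pow, Real.log_rpow two_pos,
        Real.log_rpow (by positivity),
        Real.log_mul (by positivity) (by positivity),
        Real.log_pow, Real.log_inv]
    push_cast
    ring
  have hsl : Real.log c + (θ + 1) * α * Real.log 2 + (β - 1) * Real.log D
      + (θ - 1) * α * Real.log K ≤ -γ * Real.log 2 := by
    have h := Real.log_le_log (by positivity) hsmall
    rw [Real.log_mul (by positivity) (by positivity),
        Real.log_mul (by positivity) (by positivity),
        Real.log_mul (by positivity) (by positivity),
        Real.log_rpow two_pos, Real.log_rpow hD, Real.log_rpow hK,
        Real.log_rpow two_pos] at h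
    linarith
  have hkey : β * (n:ℝ) * (γ * Real.log 2) - (n:ℝ) * (γ * Real.log 2)
      = (n:ℝ) * (α * Real.log 2) := by
    linear_combination (n:ℝ) * Real.log 2 * hγmul
  rw [l1, l2]
  nlinarith [hsl, hkey]

theorem kv_stampacchia_beta_gt_one
    (c α β θ k₀ : ℝ) (hc : 0 < c) (hα : 0 < α) (hβ : 1 < β)
    (hθ0 : 0 ≤ θ) (hθ1 : θ < 1) (hk₀ : 0 < k₀)
    (φ : ℝ → ℝ)
    (hnonneg : ∀ k, k₀ ≤ k → 0 ≤ φ k)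
    (hmono : AntitoneOn φ (Set.Ici k₀))
    (hdecay : ∀ h k, k₀ ≤ k → k < h → φ h ≤ c * k ^ (θ * α) * φ k ^ β / (h - k) ^ α) :
    ∃ kstar, k₀ < kstar ∧ φ kstar = 0 := by
  by_cases hD : φ k₀ = 0
  · refine ⟨k₀ + 1, by linarith, ?_⟩
    have h1 := hmono (Set.mem_Ici.mpr le_rfl) (Set.mem_Ici.mpr (by linarith : k₀ ≤ k₀ + 1))
      (by linarith : k₀ ≤ k₀ + 1)
    have h2 := hnonneg (k₀ + 1) (by linarith)
    rw [hD] at h1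
    linarith
  · have hD0 : 0 < φ k₀ := lt_of_le_of_ne (hnonneg k₀ le_rfl) (Ne.symm hD)
    set D := φ k₀ with hDdef
    have hβ1 : (0:ℝ) < β - 1 := by linarith
    set γ := α / (β - 1) with hγdef
    have hγ0 : 0 < γ := div_pos hα hβ1
    have hγmul : γ * (β - 1) = α := div_mul_cancel₀ α (ne_of_gt hβ1)
    set r := (2:ℝ) ^ (-γ) with hrdef
    have hr0 : 0 < r := Real.rpow_pos_of_pos two_pos _
    have hr1 : r < 1 := Real.rpow_lt_one_of_one_lt_of_neg one_lt_two (by linarith)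
    set s := (1 - θ) * α with hsdef
    have hs0 : 0 < s := mul_pos (by linarith) hα
    have hM0 : (0:ℝ) < c * 2 ^ ((θ + 1) * α) * D ^ (β - 1) := by positivity
    set ε := r / (c * 2 ^ ((θ + 1) * α) * D ^ (β - 1)) with hεdef
    have hε0 : 0 < ε := div_pos hr0 hM0
    set K := max k₀ (ε ^ (-(1 / s))) with hKdef
    have hKk₀ : k₀ ≤ K := le_max_left _ _
    have hK0 : 0 < K := lt_of_lt_of_le hk₀ hKk₀
    have hKε : K ^ ((θ - 1) * α) ≤ ε := by
      have h1 : ε ^ (-(1 / s)) ≤ K := le_max_right _ _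
      have h2 : (0:ℝ) < ε ^ (-(1 / s)) := Real.rpow_pos_of_pos hε0 _
      have he : (θ - 1) * α = -s := by rw [hsdef]; ring
      rw [he]
      calc K ^ (-s) ≤ (ε ^ (-(1 / s))) ^ (-s) :=
            Real.rpow_le_rpow_of_nonpos h2 h1 (by linarith)
        _ = ε := by
            rw [← Real.rpow_mul hε0.le]
            have : -(1 / s) * -s = 1 := by field_simp
            rw [this, Real.rpow_one]
    have hsmall : c * 2 ^ ((θ + 1) * α) * D ^ (β - 1) * K ^ ((θ - 1) * α) ≤ r := by
      rw [hεdef, le_div_iff₀ hM0] at hKε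
      nlinarith [hKε]
    -- the levels
    set lev : ℕ → ℝ := fun n => 2 * K - K * (2:ℝ)⁻¹ ^ n with hlevdef
    have hlevgeK : ∀ n, K ≤ lev n := by
      intro n
      have h1 : (2:ℝ)⁻¹ ^ n ≤ 1 := pow_le_one₀ (by norm_num) (by norm_num)
      have h2 : 0 ≤ K * (1 - (2:ℝ)⁻¹ ^ n) := mul_nonneg hK0.le (by linarith)
      simp only [hlevdef]
      nlinarith
    have hlevle : ∀ n, lev n ≤ 2 * K := by
      intro n
      have h2 : 0 ≤ K * (2:ℝ)⁻¹ ^ n := by positivity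
      simp only [hlevdef]
      linarith
    have hdiff : ∀ n, lev (n + 1) - lev n = K * (2:ℝ)⁻¹ ^ (n + 1) := by
      intro n
      simp only [hlevdef, pow_succ]
      ring
    have hlt : ∀ n, lev n < lev (n + 1) := by
      intro n
      have h4 : 0 < K * (2:ℝ)⁻¹ ^ n := by positivity
      simp only [hlevdef, pow_succ]
      nlinarith
    have claim : ∀ n, φ (lev n) ≤ D * r ^ n := by
      intro n
      induction n with
      | zero =>
        have h0 : lev 0 = K := by simp only [hlevdef, pow_zero]; ring
        rw [h0, pow_zero, mul_one]
        exact hmono (Set.mem_Ici.mpr le_rfl) (Set.mem_Ici.mpr hKk₀) hKk₀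
      | succ n IH =>
        have hk' : k₀ ≤ lev n := le_trans hKk₀ (hlevgeK n)
        have h1 := hdecay (lev (n + 1)) (lev n) hk' (hlt n)
        rw [hdiff n] at h1
        have hd : (0:ℝ) < (K * (2:ℝ)⁻¹ ^ (n + 1)) ^ α :=
          Real.rpow_pos_of_pos (by positivity) _
        have hφn : 0 ≤ φ (lev n) := hnonneg _ hk'
        have hnum : c * lev n ^ (θ * α) * φ (lev n) ^ β
            ≤ c * (2 * K) ^ (θ * α) * (D * r ^ n) ^ β := by
          apply mul_le_mul
          · exact mul_le_mul_of_nonneg_left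
              (Real.rpow_le_rpow (le_trans hK0.le (hlevgeK n)) (hlevle n) (by positivity)) hc.le
          · exact Real.rpow_le_rpow hφn IH (by linarith)
          · positivity
          · positivity
        have h2 : c * lev n ^ (θ * α) * φ (lev n) ^ β / (K * (2:ℝ)⁻¹ ^ (n + 1)) ^ α
            ≤ c * (2 * K) ^ (θ * α) * (D * r ^ n) ^ β / (K * (2:ℝ)⁻¹ ^ (n + 1)) ^ α := by
          gcongr
        have h3 : c * (2 * K) ^ (θ * α) * (D * r ^ n) ^ β / (K * (2:ℝ)⁻¹ ^ (n + 1)) ^ α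
            ≤ D * r ^ (n + 1) := by
          rw [div_le_iff₀ hd, hrdef]
          exact kv_aux c α β θ γ K D n hc hK0 hD0 hγmul hsmall
        linarith
    have hto : Filter.Tendsto (fun n : ℕ => D * r ^ n) Filter.atTop (nhds 0) := by
      simpa using (tendsto_pow_atTop_nhds_zero_of_lt_one hr0.le hr1).const_mul D
    have h2K : ∀ n, φ (2 * K) ≤ D * r ^ n := fun n =>
      le_trans (hmono (Set.mem_Ici.mpr (le_trans hKk₀ (hlevgeK n)))
        (Set.mem_Ici.mpr (by linarith)) (hlevle n)) (claim n)
    have hle : φ (2 * K) ≤ 0 := ge_of_tendsto hto (Filter.Eventually.of_forall h2K)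
    exact ⟨2 * K, by linarith, le_antisymm hle (hnonneg _ (by linarith))⟩
end

section
/- Let c, α, k₀ be positive constants, 0 < β < 1, and 0 ≤ θ < 1. Let φ : [k₀, ∞) → [0, ∞) be nonincreasing and satisfy φ(h) ≤ c·k^(θα)·φ(k)^β / (h−k)^α for all h > k ≥ k₀ > 0. Then for every k ≥ k₀, φ(k) ≤ 2^(α(1−θ)/(1−β)²)·( c^(1/(1−β)) + (2k₀)^(α(1−θ)/(1−β))·φ(k₀) )·(1/k)^(α(1−θ)/(1−β)). -/
open Real

theorem kv_stampacchia_beta_lt_one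
    (c α β θ k₀ : ℝ) (hc : 0 < c) (hα : 0 < α) (hβ0 : 0 < β) (hβ1 : β < 1)
    (hθ0 : 0 ≤ θ) (hθ1 : θ < 1) (hk₀ : 0 < k₀)
    (φ : ℝ → ℝ)
    (hnonneg : ∀ k, k₀ ≤ k → 0 ≤ φ k)
    (hmono : AntitoneOn φ (Set.Ici k₀))
    (hdecay : ∀ h k, k₀ ≤ k → k < h → φ h ≤ c * k ^ (θ * α) * φ k ^ β / (h - k) ^ α) :
    ∀ k, k₀ ≤ k →
      φ k ≤ 2 ^ (α * (1 - θ) / (1 - β) ^ 2) *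
        (c ^ (1 / (1 - β)) + (2 * k₀) ^ (α * (1 - θ) / (1 - β)) * φ k₀) *
        (1 / k) ^ (α * (1 - θ) / (1 - β)) := by
  have hβ : (0:ℝ) < 1 - β := by linarith
  have hθ' : (0:ℝ) < 1 - θ := by linarith
  set μ := α * (1 - θ) / (1 - β) with hμdef
  have hμ : 0 < μ := by
    apply div_pos _ hβ
    positivity
  have hμeq : μ * (1 - β) = α * (1 - θ) := by
    rw [hμdef]
    field_simp
  have hφ0 : 0 ≤ φ k₀ := hnonneg k₀ le_rfl
  set M := (2 ^ μ * c) ^ (1 / (1 - β)) + (2 * k₀) ^ μ * φ k₀ with hMdef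
  have hApos : 0 < (2 ^ μ * c) ^ (1 / (1 - β)) :=
    Real.rpow_pos_of_pos (by positivity) _
  have hBnn : 0 ≤ (2 * k₀) ^ μ * φ k₀ :=
    mul_nonneg (Real.rpow_nonneg (by positivity) _) hφ0
  have hMpos : 0 < M := by rw [hMdef]; linarith
  have hkey : 2 ^ μ * c ≤ M ^ (1 - β) := by
    have h1 : ((2 ^ μ * c) ^ (1 / (1 - β))) ^ (1 - β) = 2 ^ μ * c := by
      rw [← Real.rpow_mul (by positivity), one_div,
        inv_mul_cancel₀ (ne_of_gt hβ), Real.rpow_one]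
    calc 2 ^ μ * c = ((2 ^ μ * c) ^ (1 / (1 - β))) ^ (1 - β) := h1.symm
      _ ≤ M ^ (1 - β) := by
          apply Real.rpow_le_rpow hApos.le _ hβ.le
          rw [hMdef]; linarith
  -- main dyadic induction
  have main : ∀ n : ℕ, ∀ k, k₀ ≤ k → k ≤ 2 ^ (n + 1) * k₀ → φ k ≤ M * k ^ (-μ) := by
    intro n
    induction n with
    | zero =>
      intro k hk hk2
      have hkpos : 0 < k := lt_of_lt_of_le hk₀ hk
      have hk2' : k ≤ 2 * k₀ := by simpa using hk2
      have h1 : φ k ≤ φ k₀ := hmono (Set.mem_Ici.2 le_rfl) (Set.mem_Ici.2 hk) hk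
      have h2 : (2 * k₀) ^ (-μ) ≤ k ^ (-μ) :=
        Real.rpow_le_rpow_of_nonpos hkpos hk2' (neg_nonpos.2 hμ.le)
      have h3 : φ k₀ = (2 * k₀) ^ μ * φ k₀ * (2 * k₀) ^ (-μ) := by
        rw [mul_comm ((2 * k₀ : ℝ) ^ μ) (φ k₀), mul_assoc,
          ← Real.rpow_add (by positivity), add_neg_cancel, Real.rpow_zero, mul_one]
      calc φ k ≤ φ k₀ := h1
        _ = (2 * k₀) ^ μ * φ k₀ * (2 * k₀) ^ (-μ) := h3
        _ ≤ (2 * k₀) ^ μ * φ k₀ * k ^ (-μ) :=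
            mul_le_mul_of_nonneg_left h2 hBnn
        _ ≤ M * k ^ (-μ) := by
            apply mul_le_mul_of_nonneg_right _ (Real.rpow_nonneg hkpos.le _)
            rw [hMdef]; linarith
    | succ n ih =>
      intro k hk hk2
      by_cases hcase : k ≤ 2 ^ (n + 1) * k₀
      · exact ih k hk hcase
      push_neg at hcase
      have hkpos : 0 < k := lt_of_lt_of_le hk₀ hk
      have h2le : (2:ℝ) * k₀ ≤ 2 ^ (n + 1) * k₀ := by
        apply mul_le_mul_of_nonneg_right _ hk₀.le
        calc (2:ℝ) = 2 ^ 1 := (pow_one 2).symm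
          _ ≤ 2 ^ (n + 1) := by
              apply pow_le_pow_right₀ (by norm_num)
              omega
      have hhalf_lb : k₀ ≤ k / 2 := by linarith
      have hhalf_ub : k / 2 ≤ 2 ^ (n + 1) * k₀ := by
        have h22 : (2:ℝ) ^ (n + 1 + 1) = 2 * 2 ^ (n + 1) := by ring
        rw [h22] at hk2
        linarith
      have hhalfpos : 0 < k / 2 := lt_of_lt_of_le hk₀ hhalf_lb
      have ihh := ih (k / 2) hhalf_lb hhalf_ub
      have hlt : k / 2 < k := by linarith
      have hdec := hdecay k (k / 2) hhalf_lb hlt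
      have hsub : k - k / 2 = k / 2 := by ring
      rw [hsub] at hdec
      have h4 : φ (k / 2) ^ β ≤ M ^ β * (k / 2) ^ (-μ * β) := by
        have : φ (k / 2) ^ β ≤ (M * (k / 2) ^ (-μ)) ^ β :=
          Real.rpow_le_rpow (hnonneg _ hhalf_lb) ihh hβ0.le
        rwa [Real.mul_rpow hMpos.le (Real.rpow_nonneg hhalfpos.le _),
          ← Real.rpow_mul hhalfpos.le] at this
      have e1 : (k / 2) ^ (θ * α) * (k / 2) ^ (-μ * β) / (k / 2) ^ α
          = (k / 2) ^ (-μ) := by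
        rw [← Real.rpow_add hhalfpos, ← Real.rpow_sub hhalfpos]
        congr 1
        nlinarith [hμeq]
      have e2 : (k / 2 : ℝ) ^ (-μ) = 2 ^ μ * k ^ (-μ) := by
        rw [Real.div_rpow hkpos.le (by norm_num) (-μ),
          Real.rpow_neg (by norm_num : (0:ℝ) ≤ 2), div_eq_mul_inv, inv_inv, mul_comm]
      calc φ k ≤ c * (k / 2) ^ (θ * α) * φ (k / 2) ^ β / (k / 2) ^ α := hdec
        _ ≤ c * (k / 2) ^ (θ * α) * (M ^ β * (k / 2) ^ (-μ * β)) / (k / 2) ^ α := by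
            gcongr
        _ = (c * M ^ β) * ((k / 2) ^ (θ * α) * (k / 2) ^ (-μ * β) / (k / 2) ^ α) := by
            ring
        _ = (c * M ^ β) * (2 ^ μ * k ^ (-μ)) := by rw [e1, e2]
        _ = (2 ^ μ * c) * M ^ β * k ^ (-μ) := by ring
        _ ≤ M ^ (1 - β) * M ^ β * k ^ (-μ) := by
            apply mul_le_mul_of_nonneg_right _ (Real.rpow_nonneg hkpos.le _)
            exact mul_le_mul_of_nonneg_right hkey (Real.rpow_nonneg hMpos.le _)
        _ = M * k ^ (-μ) := by
            rw [← Real.rpow_add hMpos]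
            norm_num
  -- conclusion
  intro k hk
  have hkpos : 0 < k := lt_of_lt_of_le hk₀ hk
  obtain ⟨n, hn⟩ : ∃ n : ℕ, k ≤ 2 ^ (n + 1) * k₀ := by
    obtain ⟨n, hn⟩ := pow_unbounded_of_one_lt (k / k₀) (one_lt_two (α := ℝ))
    refine ⟨n, ?_⟩
    have h1 : k < 2 ^ n * k₀ := by
      rw [div_lt_iff₀ hk₀] at hn
      linarith
    have h2 : (2:ℝ) ^ n * k₀ ≤ 2 ^ (n + 1) * k₀ := by
      apply mul_le_mul_of_nonneg_right _ hk₀.le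
      apply pow_le_pow_right₀ (by norm_num)
      omega
    linarith
  have hbound := main n k hk hn
  have goalexp : α * (1 - θ) / (1 - β) ^ 2 = μ / (1 - β) := by
    rw [hμdef, div_div, ← sq]
  have h1k : (1 / k) ^ μ = k ^ (-μ) := by
    rw [one_div, Real.inv_rpow hkpos.le, ← Real.rpow_neg hkpos.le]
  have hsplit : (2 ^ μ * c) ^ (1 / (1 - β)) = 2 ^ (μ / (1 - β)) * c ^ (1 / (1 - β)) := by
    rw [Real.mul_rpow (by positivity) hc.le, ← Real.rpow_mul (by norm_num : (0:ℝ) ≤ 2)]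
    ring_nf
  have h2ge1 : (1:ℝ) ≤ 2 ^ (μ / (1 - β)) :=
    Real.one_le_rpow (by norm_num) (by positivity)
  have hM2 : M ≤ 2 ^ (μ / (1 - β)) * (c ^ (1 / (1 - β)) + (2 * k₀) ^ μ * φ k₀) := by
    rw [hMdef, hsplit, mul_add]
    have : (2 * k₀) ^ μ * φ k₀ ≤ 2 ^ (μ / (1 - β)) * ((2 * k₀) ^ μ * φ k₀) := by
      nlinarith
    linarith
  rw [goalexp, h1k]
  calc φ k ≤ M * k ^ (-μ) := hbound
    _ ≤ 2 ^ (μ / (1 - β)) * (c ^ (1 / (1 - β)) + (2 * k₀) ^ μ * φ k₀) * k ^ (-μ) :=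
        mul_le_mul_of_nonneg_right hM2 (Real.rpow_nonneg hkpos.le _)
end
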